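/- Suppose T : H → H* is Lipschitz with constant L on the ball B(u*, r), δT exists and satisfies ⟨δT(u*)v, v⟩ ≥ γ‖v‖² with γ > 0, and ‖T(u*)‖_{H*} ≤ ε with ε ≤ γ r / 2 and additionally δT is continuous with modulus ω satisfying ω(r) ≤ γ/2. Then T has a zero ū in B(u*, 2ε/γ). -/

import Mathlib

/-!
By coercivity (Lax–Milgram) `A = δT(u*)` maps `H` onto `H*` with `γ‖v‖ ≤ ‖A v‖`, and the mean value
inequality with `ω(r) ≤ γ/2` shows that `T` is approximated by `A` on `B(u*, r)` up to a
`γ/2`-Lipschitz error. The chord iteration `x ↦ x - A⁻¹ T x` is then a `1/2`-contraction, so `T`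
vanishes in every ball `B̄(y, 2‖T y‖/γ)` contained in `B(u*, r)`. For `y = u*` this ball may reach
the boundary sphere, where nothing is known about `T`; a small damped Newton step
`y = u* - t A⁻¹ T u*`, controlled by differentiability at `u*`, moves the ball strictly inside.
-/

open Metric Filter Topology Function

section RightInverse

variable {𝕜 E F : Type*} [NontriviallyNormedField 𝕜] [NormedAddCommGroup E] [NormedSpace 𝕜 E]
  [NormedAddCommGroup F] [NormedSpace 𝕜 F]

noncomputable def ContinuousLinearMap.nonlinearRightInverseOfBoundedBelow (A : E →L[𝕜] F)
    (hsurj : Surjective A) {γ : ℝ} (hγ : 0 < γ) (hA : ∀ v, γ * ‖v‖ ≤ ‖A v‖) :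
    A.NonlinearRightInverse where
  toFun f := (hsurj f).choose
  nnnorm := γ⁻¹.toNNReal
  bound' f := by
    rw [Real.coe_toNNReal _ (inv_nonneg.2 hγ.le), inv_mul_eq_div, le_div_iff₀' hγ]
    simpa only [(hsurj f).choose_spec] using hA (hsurj f).choose
  right_inv' f := (hsurj f).choose_spec

theorem ApproximatesLinearOn.exists_zero_mem_closedBall [CompleteSpace E] {T : E → F}
    {A : E →L[𝕜] F} {s : Set E} {c : NNReal} (hT : ApproximatesLinearOn T A s c)
    (hsurj : Surjective A) {γ : ℝ} (hγ : 0 < γ) (hA : ∀ v, γ * ‖v‖ ≤ ‖A v‖)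
    {y : E} {ρ : ℝ} (hρ : 0 ≤ ρ) (hTy : ‖T y‖ ≤ (γ - c) * ρ) (hs : closedBall y ρ ⊆ s) :
    ∃ x ∈ closedBall y ρ, T x = 0 := by
  set Ainv := A.nonlinearRightInverseOfBoundedBelow hsurj hγ hA
  have hAinv : (Ainv.nnnorm : ℝ)⁻¹ = γ := by
    rw [show Ainv.nnnorm = γ⁻¹.toNNReal from rfl, Real.coe_toNNReal _ (inv_nonneg.2 hγ.le),
      inv_inv]
  refine hT.surjOn_closedBall_of_nonlinearRightInverse Ainv hρ hs ?_
  rwa [mem_closedBall, dist_zero_left, hAinv]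

end RightInverse

theorem Convex.approximatesLinearOn_of_norm_fderiv_sub_le {𝕜 E F : Type*}
    [NontriviallyNormedField 𝕜] [IsRCLikeNormedField 𝕜] [NormedAddCommGroup E] [NormedSpace ℝ E]
    [NormedSpace 𝕜 E] [NormedAddCommGroup F] [NormedSpace 𝕜 F]
    {f : E → F} {φ : E →L[𝕜] F} {s : Set E} {c : NNReal} (hs : Convex ℝ s)
    (hf : ∀ x ∈ s, DifferentiableAt 𝕜 f x) (bound : ∀ x ∈ s, ‖fderiv 𝕜 f x - φ‖ ≤ c) :
    ApproximatesLinearOn f φ s c :=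
  fun _ hx _ hy => hs.norm_image_sub_le_of_norm_fderiv_le' hf bound hy hx

theorem mul_norm_le_norm_apply_of_coercive {E : Type*} [SeminormedAddCommGroup E]
    [NormedSpace ℝ E] {A : E →L[ℝ] E →L[ℝ] ℝ} {γ : ℝ} {v : E} (h : γ * ‖v‖ ^ 2 ≤ A v v) :
    γ * ‖v‖ ≤ ‖A v‖ := by
  rcases (norm_nonneg v).eq_or_lt with hv | hv
  · rw [← hv, mul_zero]; exact norm_nonneg _
  refine le_of_mul_le_mul_right ?_ hv
  calc γ * ‖v‖ * ‖v‖ = γ * ‖v‖ ^ 2 := by ring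
    _ ≤ A v v := h
    _ ≤ ‖A v v‖ := Real.le_norm_self _
    _ ≤ ‖A v‖ * ‖v‖ := (A v).le_opNorm v

theorem IsCoercive.surjective {H : Type*} [NormedAddCommGroup H] [InnerProductSpace ℝ H]
    [CompleteSpace H] {A : H →L[ℝ] H →L[ℝ] ℝ} (hA : IsCoercive A) : Surjective A := by
  intro f
  refine ⟨hA.continuousLinearEquivOfBilin.symm ((InnerProductSpace.toDual ℝ H).symm f), ?_⟩
  ext w
  rw [← hA.continuousLinearEquivOfBilin_apply, ContinuousLinearEquiv.apply_symm_apply,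
    InnerProductSpace.toDual_symm_apply]

theorem HasFDerivAt.exists_closedBall_subset_ball {E F : Type*} [NormedAddCommGroup E]
    [NormedSpace ℝ E] [NormedAddCommGroup F] [NormedSpace ℝ F] {T : E → F} {A : E →L[ℝ] F}
    {u : E} (hT : HasFDerivAt T A u) (hsurj : Surjective A) {γ κ : ℝ} (hγ : 0 < γ)
    (hA : ∀ v, γ * ‖v‖ ≤ ‖A v‖) (hκ : 1 < κ * γ) (hTu : T u ≠ 0) :
    ∃ y, closedBall y (κ * ‖T y‖) ⊆ ball u (κ * ‖T u‖) := by
  obtain ⟨w, hw⟩ := hsurj (T u)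
  have hwle : γ * ‖w‖ ≤ ‖T u‖ := hw ▸ hA w
  have hκ0 : 0 < κ := pos_of_mul_pos_left (one_pos.trans hκ) hγ.le
  -- `κη + 1 = (κγ + 1)/2 < κγ`: the linearization error loses against the drop in the residual.
  set η := (κ * γ - 1) / (2 * κ) with hη
  have hη0 : 0 < η := div_pos (by linarith) (by positivity)
  have hstep : Tendsto (fun t : ℝ => -(t • w)) (𝓝[>] 0) (𝓝 0) :=
    tendsto_nhdsWithin_of_tendsto_nhds <|
      (by fun_prop : Continuous fun t : ℝ => -(t • w)).tendsto' 0 0 (by simp)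
  obtain ⟨t, hrem, ht0, ht1⟩ :=
    (((hasFDerivAt_iff_isLittleO_nhds_zero.1 hT).comp_tendsto hstep).def hη0 |>.and
      (Ioo_mem_nhdsGT one_pos)).exists
  simp only [comp_apply, map_neg, map_smul, hw, norm_neg, norm_smul,
    Real.norm_of_nonneg ht0.le] at hrem
  refine ⟨u + -(t • w), closedBall_subset_ball' ?_⟩
  have hTy : ‖T (u + -(t • w))‖ ≤ η * (t * ‖w‖) + (1 - t) * ‖T u‖ := by
    calc ‖T (u + -(t • w))‖ = ‖(T (u + -(t • w)) - T u - -(t • T u)) + (1 - t) • T u‖ := by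
          congr 1; module
      _ ≤ η * (t * ‖w‖) + (1 - t) * ‖T u‖ := by
          refine (norm_add_le _ _).trans (add_le_add hrem ?_)
          rw [norm_smul, Real.norm_of_nonneg (by linarith)]
  have hdist : dist (u + -(t • w)) u = t * ‖w‖ := by
    rw [dist_eq_norm, add_sub_cancel_left, norm_neg, norm_smul, Real.norm_of_nonneg ht0.le]
  rw [hdist]
  have hTu0 : 0 < ‖T u‖ := norm_pos_iff.2 hTu
  have hκη : κ * η = (κ * γ - 1) / 2 := by rw [hη]; field_simp
  nlinarith [mul_le_mul_of_nonneg_left hTy hκ0.le, mul_pos ht0 hTu0,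
    mul_le_mul_of_nonneg_left hwle ht0.le]

theorem force_based_inverse_function_theorem_general
    {H : Type*} [NormedAddCommGroup H] [InnerProductSpace ℝ H] [CompleteSpace H]
    (T : H → (H →L[ℝ] ℝ)) (u : H) (L : NNReal) (r γ ε : ℝ)
    (hr : 0 < r) (hγ : 0 < γ)
    (hdiff : ∀ v ∈ ball u r, DifferentiableAt ℝ T v)
    (hcoer : ∀ v : H, γ * ‖v‖ ^ 2 ≤ fderiv ℝ T u v v)
    (hres : ‖T u‖ ≤ ε) (hsmall : ε ≤ γ * r / 2)
    (ω : ℝ → ℝ) (hω : Monotone ω)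
    (hmod : ∀ v ∈ closedBall u r, ‖fderiv ℝ T v - fderiv ℝ T u‖ ≤ ω ‖v - u‖)
    (hωr : ω r ≤ γ / 2) :
    ∃ ub ∈ closedBall u (2 * ε / γ), T ub = 0 := by
  set A := fderiv ℝ T u
  have hA : ∀ v, γ * ‖v‖ ≤ ‖A v‖ := fun v => mul_norm_le_norm_apply_of_coercive (hcoer v)
  have hsurj : Surjective A :=
    IsCoercive.surjective ⟨γ, hγ, fun v => by simpa only [sq, mul_assoc] using hcoer v⟩
  have happrox : ApproximatesLinearOn T A (ball u r) (γ / 2).toNNReal := by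
    refine (convex_ball u r).approximatesLinearOn_of_norm_fderiv_sub_le hdiff fun v hv => ?_
    rw [Real.coe_toNNReal _ (by positivity)]
    exact (hmod v (ball_subset_closedBall hv)).trans
      ((hω (mem_ball_iff_norm.1 hv).le).trans hωr)
  by_cases hTu : T u = 0
  · exact ⟨u, mem_closedBall_self (div_nonneg (by linarith [norm_nonneg (T u)]) hγ.le), hTu⟩
  obtain ⟨y, hy⟩ := (hdiff u (mem_ball_self hr)).hasFDerivAt.exists_closedBall_subset_ball
    hsurj hγ hA (κ := 2 / γ) (by field_simp; norm_num) hTu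
  have hball : ball u (2 / γ * ‖T u‖) ⊆ ball u r := ball_subset_ball <| by
    rw [div_mul_eq_mul_div, div_le_iff₀ hγ]; linarith
  obtain ⟨x, hx, hTx⟩ := happrox.exists_zero_mem_closedBall hsurj hγ hA (by positivity)
    (le_of_eq (by rw [Real.coe_toNNReal _ (by positivity)]; field_simp; ring))
    (hy.trans hball)
  refine ⟨x, closedBall_subset_closedBall ?_ (ball_subset_closedBall (hy hx)), hTx⟩
  rw [div_mul_eq_mul_div]
  gcongr

/-- Zero-finding inverse function theorem for force operators `T : H → H*`:
if `T` is Lipschitz with constant `L` on `B(u*, r)`, `δT(u*)` is coercive with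
constant `γ > 0`, `‖T(u*)‖ ≤ ε ≤ γ r / 2`, and `δT` is continuous with a monotone
modulus `ω` satisfying `ω(r) ≤ γ/2`, then `T` has a zero in the closed ball
`B(u*, 2ε/γ)`. -/
theorem force_based_inverse_function_theorem
    {H : Type*} [NormedAddCommGroup H] [InnerProductSpace ℝ H] [CompleteSpace H]
    (T : H → (H →L[ℝ] ℝ)) (u : H) (L : NNReal) (r γ ε : ℝ)
    (hr : 0 < r) (hγ : 0 < γ) (hε : 0 ≤ ε)
    (hLip : LipschitzOnWith L T (ball u r))
    (hdiff : ∀ v ∈ ball u r, DifferentiableAt ℝ T v)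
    (hcoer : ∀ v : H, γ * ‖v‖ ^ 2 ≤ fderiv ℝ T u v v)
    (hres : ‖T u‖ ≤ ε) (hsmall : ε ≤ γ * r / 2)
    (ω : ℝ → ℝ) (hω : Monotone ω)
    (hmod : ∀ v ∈ closedBall u r, ‖fderiv ℝ T v - fderiv ℝ T u‖ ≤ ω ‖v - u‖)
    (hωr : ω r ≤ γ / 2) :
    ∃ ub ∈ closedBall u (2 * ε / γ), T ub = 0 :=
  force_based_inverse_function_theorem_general T u L r γ ε hr hγ hdiff hcoer hres hsmall ω hω hmod
    hωr
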